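/- Let A be a skew PBW extension of a ring R with variables x_1,…,x_n, and for k ≥ 0 let A_k be the left R-submodule of A spanned by the standard monomials x^α with |α| = α_1 + ⋯ + α_n = k. Then A = ⊕_{k≥0} A_k makes A a finitely semi-graded (FSG) ring with A_0 = R, and each A_k is a free left R-module of rank equal to the binomial coefficient C(n+k−1, k) = C(n+k−1, n−1). -/

import Mathlib

open scoped DirectSum

/-- A *skew PBW extension* of a ring `R` inside a ring `A`, with variables `x 0, …, x (n-1)`. -/
structure SkewPBWExtension (R A : Type*) [Ring R] [Ring A] (n : ℕ) (x : Fin n → A) where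
  ι : R →+* A
  ι_injective : Function.Injective ι
  basis : ∀ a : A, ∃! c : (Fin n → ℕ) →₀ R,
    a = c.sum fun α r => ι r * (List.ofFn fun i => x i ^ α i).prod
  cond3 : ∀ (i : Fin n) (r : R), r ≠ 0 →
    ∃ c : R, c ≠ 0 ∧ ∃ r' : R, x i * ι r = ι c * x i + ι r'
  cond4 : ∀ i j : Fin n, ∃ c : R, c ≠ 0 ∧
    ∃ (r0 : R) (r' : Fin n → R), x j * x i = ι c * (x i * x j) + ι r0 + ∑ k, ι (r' k) * x k

/-- A ring `B` is *semi-graded (SG)* if there is a family `{B_n}_{n ≥ 0}` of additive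
subgroups such that `B = ⊕_{n≥0} B_n`, `B_m B_n ⊆ B_0 ⊕ ⋯ ⊕ B_{m+n}`, and `1 ∈ B_0`. -/
structure SemiGraded (B : Type*) [Ring B] where
  comp : ℕ → AddSubgroup B
  internal : DirectSum.IsInternal comp
  mul_mem : ∀ m n : ℕ, ∀ a ∈ comp m, ∀ b ∈ comp n, a * b ∈ ⨆ k ∈ Set.Iic (m + n), comp k
  one_mem' : 1 ∈ comp 0

/-- `v : Fin k → B` is a basis of the free left `B_0`-module `B_n`. -/
def SemiGraded.IsComp0Basis {B : Type*} [Ring B] (SG : SemiGraded B) (n : ℕ) {k : ℕ}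
    (v : Fin k → B) : Prop :=
  (∀ i, v i ∈ SG.comp n) ∧
  ∀ b ∈ SG.comp n, ∃! c : Fin k → B, (∀ i, c i ∈ SG.comp 0) ∧ b = ∑ i, c i * v i

/-- A ring `B` is *finitely semi-graded (FSG)* if it is semi-graded, generated as a ring by
`B_0` and finitely many elements, and every `B_n` is a free left `B_0`-module of finite
rank. -/
structure FinitelySemiGraded (B : Type*) [Ring B] extends SemiGraded B where
  fin_gen : ∃ s : Finset B, Subring.closure ((comp 0 : Set B) ∪ s) = ⊤
  free : ∀ n : ℕ, ∃ (k : ℕ) (v : Fin k → B), toSemiGraded.IsComp0Basis n v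

/-- The `k`-th homogeneous component of a skew PBW extension: the left `R`-submodule
spanned by the standard monomials of total degree `k`. -/
def SkewPBWExtension.Acomp {R A : Type*} [Ring R] [Ring A] {n : ℕ} {x : Fin n → A}
    (E : SkewPBWExtension R A n x) (k : ℕ) : AddSubgroup A :=
  AddSubgroup.closure
    {a : A | ∃ (r : R) (α : Fin n → ℕ), (∑ i, α i) = k ∧
      a = E.ι r * (List.ofFn fun i => x i ^ α i).prod}

/-!
The coefficient map `A ≃+ ((Fin n → ℕ) →₀ R)` given by the PBW basis identifies `A_k` with the
finitely supported families concentrated in degree `k`; this gives the direct sum decomposition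
and, after enumerating the exponents of degree `k` (stars and bars), the free bases of rank
`C(n+k-1, k)`. The only ring-theoretic content is `A_m A_k ⊆ A_0 ⊕ ⋯ ⊕ A_{m+k}`: the degree
filtration is multiplicative because `x i * r ∈ R x i + R` and `x j * x i ∈ R x i x j + R + ∑ R x_l`
allow a product of monomials to be rewritten in standard order without raising the degree.
-/

theorem List.prod_ofFn_update_mul {M : Type*} [Monoid M] {m : ℕ} (f : Fin m → M) (i : Fin m)
    (c : M) (h : ∀ j < i, f j = 1) :
    (List.ofFn (Function.update f i (c * f i))).prod = c * (List.ofFn f).prod := by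
  induction m with
  | zero => exact i.elim0
  | succ m ih =>
    rw [List.ofFn_succ, List.ofFn_succ, List.prod_cons, List.prod_cons]
    cases i using Fin.cases with
    | zero => simp [mul_assoc]
    | succ i =>
      have hf0 : f 0 = 1 := h 0 (Fin.succ_pos i)
      rw [Function.update_of_ne (Fin.succ_ne_zero i).symm, hf0, one_mul, one_mul]
      convert ih (fun j => f j.succ) i fun j hj => h j.succ (Fin.succ_lt_succ_iff.mpr hj) using 3
      exact Function.update_comp_eq_of_injective f (Fin.succ_injective m) i _

def stdMonomial {M : Type*} [Monoid M] {n : ℕ} (x : Fin n → M) (α : Fin n → ℕ) : M :=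
  (List.ofFn fun i => x i ^ α i).prod

section StdMonomial

variable {M : Type*} [Monoid M] {n : ℕ} (x : Fin n → M)

@[simp]
theorem stdMonomial_zero : stdMonomial x 0 = 1 := by
  simp [stdMonomial]

theorem mul_stdMonomial_of_forall_lt {i : Fin n} {α : Fin n → ℕ} (h : ∀ j < i, α j = 0) :
    x i * stdMonomial x α = stdMonomial x (α + Pi.single i 1) := by
  have hupdate : (fun j => x j ^ (α + Pi.single i 1 : Fin n → ℕ) j) =
      Function.update (fun j => x j ^ α j) i (x i * x i ^ α i) := by
    funext j
    rcases eq_or_ne j i with rfl | hj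
    · simp [pow_succ']
    · simp [hj]
  rw [stdMonomial, stdMonomial, hupdate,
    List.prod_ofFn_update_mul _ _ _ fun j hj => by simp [h j hj]]

end StdMonomial

theorem Fin.exists_eq_add_single_of_ne_zero {n : ℕ} {α : Fin n → ℕ} {j₀ : Fin n} (h : α j₀ ≠ 0) :
    ∃ j ≤ j₀, ∃ β : Fin n → ℕ, α = β + Pi.single j 1 ∧ ∀ k < j, β k = 0 := by
  obtain ⟨j, hj, hmin⟩ := wellFounded_lt.has_min {j | α j ≠ 0} ⟨j₀, h⟩
  refine ⟨j, not_lt.1 (hmin j₀ h), α - Pi.single j 1, ?_, fun k hk => ?_⟩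
  · funext k
    rcases eq_or_ne k j with rfl | hk
    · have hk : α k ≠ 0 := hj
      simp only [Pi.add_apply, Pi.sub_apply, Pi.single_eq_same]
      omega
    · simp [hk]
  · by_contra hβk
    exact hmin k (by simpa [hk.ne] using hβk) hk

theorem sum_add_piSingle_one {ι : Type*} [Fintype ι] [DecidableEq ι] (β : ι → ℕ) (j : ι) :
    ∑ i, (β + Pi.single j 1 : ι → ℕ) i = ∑ i, β i + 1 := by
  simp [Finset.sum_add_distrib]

theorem AddSubgroup.mul_mem_of_right_mem_closure {A : Type*} [NonUnitalNonAssocRing A]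
    {s : Set A} {H : AddSubgroup A} {a b : A} (h : ∀ c ∈ s, a * c ∈ H)
    (hb : b ∈ AddSubgroup.closure s) : a * b ∈ H :=
  (AddSubgroup.closure_le (H.comap (AddMonoidHom.mulLeft a))).mpr h hb

theorem AddSubgroup.mul_mem_of_left_mem_closure {A : Type*} [NonUnitalNonAssocRing A]
    {s : Set A} {H : AddSubgroup A} {a b : A} (h : ∀ c ∈ s, c * b ∈ H)
    (ha : a ∈ AddSubgroup.closure s) : a * b ∈ H :=
  (AddSubgroup.closure_le (H.comap (AddMonoidHom.mulRight b))).mpr h ha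

theorem Finsupp.isInternal_supported_preimage {ι κ R M : Type*} [DecidableEq κ] [Ring R]
    [AddCommGroup M] [Module R M] (f : ι → κ) :
    DirectSum.IsInternal fun k => Finsupp.supported M R (f ⁻¹' {k}) := by
  refine DirectSum.isInternal_submodule_of_iSupIndep_of_iSup_eq_top
    (iSupIndep_def.2 fun k => ?_) ?_
  · refine (Finsupp.disjoint_supported_supported disjoint_compl_right).mono_right
      (iSup₂_le fun j hj => Finsupp.supported_mono fun α hα => ?_)
    simp_all
  · rw [← Finsupp.supported_iUnion, ← Set.preimage_iUnion, Set.iUnion_of_singleton,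
      Set.preimage_univ, Finsupp.supported_univ]

theorem DirectSum.IsInternal.map_addEquiv {ι G H : Type*} [DecidableEq ι] [AddCommGroup G]
    [AddCommGroup H] {S : ι → AddSubgroup G} (h : IsInternal S) (e : G ≃+ H) :
    IsInternal fun i => (S i).map (e : G →+ H) := by
  set u := congrAddEquiv fun i => e.addSubgroupMap (S i)
  have hcomm : (DirectSum.coeAddMonoidHom fun i => (S i).map (e : G →+ H)).comp u.toAddMonoidHom =
      (e : G →+ H).comp (DirectSum.coeAddMonoidHom S) := by
    ext i g
    simp [u, congrAddEquiv]
  have hcoe : ⇑(DirectSum.coeAddMonoidHom fun i => (S i).map (e : G →+ H)) =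
      e ∘ DirectSum.coeAddMonoidHom S ∘ u.symm := by
    funext z
    simpa using DFunLike.congr_fun hcomm (u.symm z)
  unfold IsInternal
  rw [hcoe]
  exact e.bijective.comp (h.comp u.symm.bijective)

noncomputable def finChooseEquivSumEq (n k : ℕ) :
    Fin ((n + k - 1).choose k) ≃ {α : Fin n → ℕ // ∑ i, α i = k} :=
  (Fintype.equivFinOfCardEq (by simp [Sym.card_sym_eq_choose])).symm.trans
    (Sym.equivNatSumOfFintype (Fin n) k)

theorem Finsupp.sum_single_apply_of_injective {ι α M : Type*} [Fintype ι] [AddCommMonoid M]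
    {v : ι → α} (hv : Function.Injective v) (r : ι → M) (j : ι) :
    (∑ i, Finsupp.single (v i) (r i)) (v j) = r j := by
  classical
  simp [Finsupp.finsetSum_apply, Finsupp.single_apply, hv.eq_iff]

namespace SkewPBWExtension

variable {R A : Type*} [Ring R] [Ring A] {n : ℕ} {x : Fin n → A} (E : SkewPBWExtension R A n x)

noncomputable def ofCoeffs : ((Fin n → ℕ) →₀ R) →+ A :=
  Finsupp.liftAddHom fun α => (AddMonoidHom.mulRight (stdMonomial x α)).comp E.ι.toAddMonoidHom

theorem ofCoeffs_apply (c : (Fin n → ℕ) →₀ R) :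
    E.ofCoeffs c = c.sum fun α r => E.ι r * stdMonomial x α :=
  Finsupp.liftAddHom_apply _ c

theorem ofCoeffs_single (α : Fin n → ℕ) (r : R) :
    E.ofCoeffs (Finsupp.single α r) = E.ι r * stdMonomial x α := by
  simp [ofCoeffs_apply]

theorem ofCoeffs_bijective : Function.Bijective E.ofCoeffs :=
  ⟨fun c c' h =>
      (E.basis (E.ofCoeffs c)).unique (E.ofCoeffs_apply c) (h.trans (E.ofCoeffs_apply c')),
    fun a => (E.basis a).exists.imp fun c hc => ((E.ofCoeffs_apply c).trans hc.symm)⟩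

noncomputable def coeffEquiv : ((Fin n → ℕ) →₀ R) ≃+ A :=
  AddEquiv.ofBijective E.ofCoeffs E.ofCoeffs_bijective

theorem ι_mul_stdMonomial_mem_acomp (r : R) (α : Fin n → ℕ) :
    E.ι r * stdMonomial x α ∈ E.Acomp (∑ i, α i) :=
  AddSubgroup.subset_closure ⟨r, α, rfl, rfl⟩

theorem acomp_eq_map (k : ℕ) :
    E.Acomp k =
      (Finsupp.supported R ℤ ((fun α : Fin n → ℕ => ∑ i, α i) ⁻¹' {k})).toAddSubgroup.map
        (E.coeffEquiv : ((Fin n → ℕ) →₀ R) →+ A) := by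
  refine le_antisymm ((AddSubgroup.closure_le _).mpr ?_) ?_
  · rintro _ ⟨r, α, rfl, rfl⟩
    exact ⟨Finsupp.single α r, Finsupp.single_mem_supported ℤ r rfl, E.ofCoeffs_single α r⟩
  · rintro _ ⟨c, hc, rfl⟩
    change E.ofCoeffs c ∈ _
    rw [ofCoeffs_apply]
    exact AddSubgroup.sum_mem _ fun α hα => hc hα ▸ E.ι_mul_stdMonomial_mem_acomp _ α

theorem acomp_isInternal : DirectSum.IsInternal E.Acomp := by
  rw [funext E.acomp_eq_map]
  exact (Finsupp.isInternal_supported_preimage (R := ℤ) _).map_addEquiv E.coeffEquiv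

theorem acomp_zero : E.Acomp 0 = E.ι.range.toAddSubgroup := by
  refine le_antisymm ((AddSubgroup.closure_le _).mpr ?_) ?_
  · rintro _ ⟨r, α, hα, rfl⟩
    obtain rfl : α = 0 := funext fun i => Finset.sum_eq_zero_iff.mp hα i (Finset.mem_univ i)
    exact ⟨r, by simp⟩
  · rintro _ ⟨r, rfl⟩
    simpa using E.ι_mul_stdMonomial_mem_acomp r 0

theorem closure_acomp_zero_union_range_eq_top :
    Subring.closure ((E.Acomp 0 : Set A) ∪ Set.range x) = ⊤ := by
  refine eq_top_iff.mpr fun a _ => ?_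
  obtain ⟨c, rfl⟩ := E.ofCoeffs_bijective.surjective a
  rw [ofCoeffs_apply]
  refine Subring.sum_mem _ fun α _ => Subring.mul_mem _ ?_ (Subring.list_prod_mem _ ?_)
  · exact Subring.subset_closure (.inl (by simpa using E.ι_mul_stdMonomial_mem_acomp (c α) 0))
  · simp only [List.mem_ofFn, forall_exists_index]
    rintro _ i rfl
    exact Subring.pow_mem _ (Subring.subset_closure (.inr ⟨i, rfl⟩)) _

def filtration (N : ℕ) : AddSubgroup A :=
  AddSubgroup.closure {a | ∃ (r : R) (α : Fin n → ℕ), ∑ i, α i ≤ N ∧ a = E.ι r * stdMonomial x α}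

theorem ι_mul_stdMonomial_mem_filtration {N : ℕ} (r : R) {α : Fin n → ℕ} (h : ∑ i, α i ≤ N) :
    E.ι r * stdMonomial x α ∈ E.filtration N :=
  AddSubgroup.subset_closure ⟨r, α, h, rfl⟩

theorem stdMonomial_mem_filtration {N : ℕ} {α : Fin n → ℕ} (h : ∑ i, α i ≤ N) :
    stdMonomial x α ∈ E.filtration N := by
  simpa using E.ι_mul_stdMonomial_mem_filtration 1 h

theorem filtration_mono : Monotone E.filtration :=
  fun _ _ hMN => AddSubgroup.closure_mono fun _ ⟨r, α, hα, ha⟩ => ⟨r, α, hα.trans hMN, ha⟩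

theorem acomp_le_filtration (N : ℕ) : E.Acomp N ≤ E.filtration N :=
  (AddSubgroup.closure_le _).mpr fun _ ⟨r, α, hα, ha⟩ =>
    AddSubgroup.subset_closure ⟨r, α, hα.le, ha⟩

theorem filtration_le_iSup_acomp (N : ℕ) : E.filtration N ≤ ⨆ k ∈ Set.Iic N, E.Acomp k :=
  (AddSubgroup.closure_le _).mpr fun _ ⟨r, α, hα, ha⟩ =>
    le_biSup E.Acomp (Set.mem_Iic.mpr hα) (ha ▸ E.ι_mul_stdMonomial_mem_acomp r α)

theorem ι_mul_mem_filtration {N : ℕ} (s : R) {b : A} (hb : b ∈ E.filtration N) :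
    E.ι s * b ∈ E.filtration N := by
  refine AddSubgroup.mul_mem_of_right_mem_closure ?_ hb
  rintro _ ⟨r, α, hα, rfl⟩
  rw [← mul_assoc, ← map_mul]
  exact E.ι_mul_stdMonomial_mem_filtration _ hα

/-- By `cond3`, `x j * ι s = ι c * x j + ι r`, so it suffices to multiply monomials. -/
theorem x_mul_mem_filtration_of_forall_stdMonomial {N : ℕ} {j : Fin n}
    (H : ∀ β : Fin n → ℕ, ∑ i, β i ≤ N → x j * stdMonomial x β ∈ E.filtration (N + 1))
    {b : A} (hb : b ∈ E.filtration N) : x j * b ∈ E.filtration (N + 1) := by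
  refine AddSubgroup.mul_mem_of_right_mem_closure ?_ hb
  rintro _ ⟨s, β, hβ, rfl⟩
  obtain rfl | hs := eq_or_ne s 0
  · simp
  obtain ⟨c, -, r, hcr⟩ := E.cond3 j s hs
  rw [← mul_assoc, hcr, add_mul, mul_assoc]
  exact add_mem (E.ι_mul_mem_filtration c (H β hβ))
    (E.ι_mul_stdMonomial_mem_filtration r (hβ.trans N.le_succ))

/-- The induction is on the degree `d` and, for fixed `d`, on the index `i`: when `x i` meets a
smaller variable `x j` at the front of the monomial, `cond4` swaps them modulo lower degree. -/
theorem x_mul_stdMonomial_mem_filtration (d : ℕ) :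
    ∀ (i : Fin n) (α : Fin n → ℕ), ∑ k, α k ≤ d →
      x i * stdMonomial x α ∈ E.filtration (d + 1) := by
  induction d using Nat.strong_induction_on with
  | _ d IHd =>
  intro i
  induction i using WellFoundedLT.induction with
  | _ i IHi =>
  intro α hα
  by_cases hinv : ∃ j₀ < i, α j₀ ≠ 0
  · obtain ⟨j₀, hj₀i, hj₀⟩ := hinv
    obtain ⟨j, hjj₀, β, rfl, hβ⟩ := Fin.exists_eq_add_single_of_ne_zero hj₀
    have hdeg : ∑ k, β k < d := by
      rw [sum_add_piSingle_one] at hα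
      omega
    obtain ⟨c, -, r₀, r, hcr⟩ := E.cond4 j i
    rw [← mul_stdMonomial_of_forall_lt x hβ, ← mul_assoc, hcr, add_mul, add_mul, Finset.sum_mul]
    refine add_mem (add_mem ?_ ?_) (AddSubgroup.sum_mem _ fun k _ => ?_)
    · rw [mul_assoc, mul_assoc]
      refine E.ι_mul_mem_filtration c (E.x_mul_mem_filtration_of_forall_stdMonomial
        (IHi j (hjj₀.trans_lt hj₀i)) ?_)
      exact E.filtration_mono (by omega) (IHd _ hdeg i β le_rfl)
    · exact E.ι_mul_stdMonomial_mem_filtration r₀ (by omega)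
    · rw [mul_assoc]
      exact E.ι_mul_mem_filtration _ (E.filtration_mono (by omega) (IHd _ hdeg k β le_rfl))
  · push Not at hinv
    rw [mul_stdMonomial_of_forall_lt x hinv]
    exact E.stdMonomial_mem_filtration ((sum_add_piSingle_one α i).trans_le (by omega))

theorem x_mul_mem_filtration {N : ℕ} (i : Fin n) {b : A} (hb : b ∈ E.filtration N) :
    x i * b ∈ E.filtration (N + 1) :=
  E.x_mul_mem_filtration_of_forall_stdMonomial (E.x_mul_stdMonomial_mem_filtration N i) hb

theorem stdMonomial_mul_mem_filtration {N : ℕ} (α : Fin n → ℕ) {b : A}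
    (hb : b ∈ E.filtration N) : stdMonomial x α * b ∈ E.filtration (∑ i, α i + N) := by
  suffices ∀ d (α : Fin n → ℕ), ∑ i, α i = d → stdMonomial x α * b ∈ E.filtration (d + N) from
    this _ α rfl
  intro d
  induction d with
  | zero =>
    intro α hα
    obtain rfl : α = 0 := funext fun i => Finset.sum_eq_zero_iff.mp hα i (Finset.mem_univ i)
    simpa using hb
  | succ d ih =>
    intro α hα
    obtain ⟨j₀, -, hj₀⟩ := Finset.exists_ne_zero_of_sum_ne_zero (hα.trans_ne d.succ_ne_zero)
    obtain ⟨j, -, β, rfl, hβ⟩ := Fin.exists_eq_add_single_of_ne_zero hj₀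
    have hdeg : ∑ i, β i = d := by
      rw [sum_add_piSingle_one] at hα
      omega
    rw [← mul_stdMonomial_of_forall_lt x hβ, mul_assoc, add_right_comm]
    exact E.x_mul_mem_filtration j (ih β hdeg)

theorem mul_mem_filtration {M N : ℕ} {a b : A} (ha : a ∈ E.filtration M)
    (hb : b ∈ E.filtration N) : a * b ∈ E.filtration (M + N) := by
  refine AddSubgroup.mul_mem_of_left_mem_closure ?_ ha
  rintro _ ⟨r, α, hα, rfl⟩
  rw [mul_assoc]
  exact E.ι_mul_mem_filtration r
    (E.filtration_mono (by omega) (E.stdMonomial_mul_mem_filtration α hb))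

theorem mul_mem_iSup_acomp {m k : ℕ} {a b : A} (ha : a ∈ E.Acomp m) (hb : b ∈ E.Acomp k) :
    a * b ∈ ⨆ l ∈ Set.Iic (m + k), E.Acomp l :=
  E.filtration_le_iSup_acomp _
    (E.mul_mem_filtration (E.acomp_le_filtration m ha) (E.acomp_le_filtration k hb))

theorem stdMonomial_mem_acomp {k : ℕ} {α : Fin n → ℕ} (h : ∑ i, α i = k) :
    stdMonomial x α ∈ E.Acomp k := by
  simpa [h] using E.ι_mul_stdMonomial_mem_acomp 1 α

theorem exists_eq_sum_of_mem_acomp {k : ℕ} {b : A} (hb : b ∈ E.Acomp k) :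
    ∃ r : Fin ((n + k - 1).choose k) → R,
      b = ∑ i, E.ι (r i) * stdMonomial x (finChooseEquivSumEq n k i) := by
  set e := finChooseEquivSumEq n k
  rw [acomp_eq_map] at hb
  obtain ⟨c, hc, rfl⟩ := hb
  refine ⟨fun i => c (e i), ?_⟩
  have hsupp : c.support ⊆ Finset.univ.map (e.toEmbedding.trans (Function.Embedding.subtype _)) :=
    fun α hα => Finset.mem_map.mpr ⟨e.symm ⟨α, hc hα⟩, Finset.mem_univ _, by simp⟩
  change E.ofCoeffs c = _
  rw [ofCoeffs_apply, Finsupp.sum_of_support_subset c hsupp _ (by simp), Finset.sum_map]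
  rfl

theorem sum_ι_mul_stdMonomial_injective {ι : Type*} [Fintype ι] {v : ι → Fin n → ℕ}
    (hv : Function.Injective v) :
    Function.Injective fun r : ι → R => ∑ i, E.ι (r i) * stdMonomial x (v i) := by
  intro r r' h
  have hsum (r : ι → R) : ∑ i, E.ι (r i) * stdMonomial x (v i) =
      E.ofCoeffs (∑ i, Finsupp.single (v i) (r i)) := by
    simp [map_sum, ofCoeffs_single]
  have hcoeffs := E.ofCoeffs_bijective.injective ((hsum r).symm.trans (h.trans (hsum r')))
  funext j
  simpa [Finsupp.sum_single_apply_of_injective hv] using DFunLike.congr_fun hcoeffs (v j)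

noncomputable def semiGraded : SemiGraded A where
  comp := E.Acomp
  internal := E.acomp_isInternal
  mul_mem _ _ _ ha _ hb := E.mul_mem_iSup_acomp ha hb
  one_mem' := by simpa using E.stdMonomial_mem_acomp (α := 0) (by simp)

theorem isComp0Basis_stdMonomial (k : ℕ) :
    E.semiGraded.IsComp0Basis k fun i => stdMonomial x (finChooseEquivSumEq n k i) := by
  have hcomp0 (a : A) : a ∈ E.semiGraded.comp 0 ↔ ∃ r, E.ι r = a := by
    rw [show E.semiGraded.comp 0 = _ from E.acomp_zero]
    rfl
  refine ⟨fun i => E.stdMonomial_mem_acomp (finChooseEquivSumEq n k i).2, fun b hb => ?_⟩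
  obtain ⟨r, rfl⟩ := E.exists_eq_sum_of_mem_acomp hb
  refine ⟨fun i => E.ι (r i), ⟨fun i => (hcomp0 _).mpr ⟨r i, rfl⟩, rfl⟩, ?_⟩
  rintro c ⟨hc, hsum⟩
  choose r' hr' using fun i => (hcomp0 (c i)).mp (hc i)
  have hr : r' = r := E.sum_ι_mul_stdMonomial_injective
    (Subtype.val_injective.comp (finChooseEquivSumEq n k).injective)
    (by simpa only [hr', Function.comp_apply] using hsum.symm)
  funext i
  rw [← hr', hr]

noncomputable def finitelySemiGraded : FinitelySemiGraded A where
  toSemiGraded := E.semiGraded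
  fin_gen := ⟨(Set.finite_range x).toFinset, by
    rw [Set.Finite.coe_toFinset]
    exact E.closure_acomp_zero_union_range_eq_top⟩
  free k := ⟨_, _, E.isComp0Basis_stdMonomial k⟩

end SkewPBWExtension

theorem skewPBWExtension_finitelySemiGraded_general {R A : Type*} [Ring R] [Ring A]
    {n : ℕ} (hn : 0 < n) {x : Fin n → A} (E : SkewPBWExtension R A n x) :
    ∃ F : FinitelySemiGraded A,
      (∀ k : ℕ, F.comp k = E.Acomp k) ∧
      (F.comp 0 = E.ι.range.toAddSubgroup) ∧
      (∀ k : ℕ, ∃ v : Fin ((n + k - 1).choose k) → A, F.toSemiGraded.IsComp0Basis k v) ∧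
      (∀ k : ℕ, (n + k - 1).choose k = (n + k - 1).choose (n - 1)) :=
  ⟨E.finitelySemiGraded, fun _ => rfl, E.acomp_zero, fun k => ⟨_, E.isComp0Basis_stdMonomial k⟩,
    fun k => Nat.choose_symm_of_eq_add (by omega)⟩

/-- A skew PBW extension `A = σ(R)⟨x_1,…,x_n⟩` is a finitely semi-graded ring via
`A = ⊕_{k≥0} A_k`, where `A_k` is spanned by the standard monomials of total degree `k`;
moreover `A_0 = R` and each `A_k` is a free left `R`-module of rank
`C(n+k-1, k) = C(n+k-1, n-1)`. -/
theorem skewPBWExtension_finitelySemiGraded {R A : Type*} [Ring R] [Ring A]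
    [InvariantBasisNumber R] {n : ℕ} (hn : 0 < n) {x : Fin n → A} (E : SkewPBWExtension R A n x) :
    ∃ F : FinitelySemiGraded A,
      (∀ k : ℕ, F.comp k = E.Acomp k) ∧
      (F.comp 0 = E.ι.range.toAddSubgroup) ∧
      (∀ k : ℕ, ∃ v : Fin ((n + k - 1).choose k) → A, F.toSemiGraded.IsComp0Basis k v) ∧
      (∀ k : ℕ, (n + k - 1).choose k = (n + k - 1).choose (n - 1)) :=
  skewPBWExtension_finitelySemiGraded_general hn E
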